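/- arXiv:1605.05494 — 6 statements merged into one kernel-verified Lean document; each statement's English description precedes it below -/
import Mathlib

section
/- Let p be a prime and let G be a finite p-group satisfying rk(G) = r and whose exponent is p^d. Then |G| ≤ p^(2·d·r^2). -/
/-!
Let `A` be maximal among the normal abelian subgroups of `G`. In a `p`-group such an `A` is
self-centralizing: otherwise `C_G(A)/A` is a nontrivial normal subgroup of the `p`-group `G/A`, so
it contains a nontrivial central element `xA`, and `A⟨x⟩` is a larger normal abelian subgroup.
Hence conjugation embeds `G/A` into `Aut A`, and an automorphism is determined by its values on
`rk A ≤ r` generators, so `|G| ≤ |A|^(r+1)`. As `A` is abelian of rank at most `r` and exponent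
dividing `p^d`, `|A| ≤ p^(dr)`, and `dr(r+1) ≤ 2dr²`.
-/

open Subgroup

section

variable {G : Type*} [Group G]

theorem IsPGroup.exists_ne_one_mem_center_of_normal {p : ℕ} [Fact p.Prime] [Finite G]
    (hG : IsPGroup p G) {N : Subgroup G} [N.Normal] (hN : N ≠ ⊥) :
    ∃ x ∈ N, x ∈ center G ∧ x ≠ 1 := by
  have hp : p ∣ Nat.card N :=
    ((hG.to_subgroup N).card_eq_or_dvd).resolve_left (mt Subgroup.card_eq_one.mp hN)
  have hone : (1 : N) ∈ MulAction.fixedPoints (ConjAct G) N := fun g => smul_one g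
  obtain ⟨b, hb, hb1⟩ :=
    (hG.of_equiv ConjAct.toConjAct).exists_fixed_point_of_prime_dvd_card_of_fixed_point N hp hone
  refine ⟨b, b.2, mem_center_iff.mpr fun g => ?_, fun h => hb1 (Subtype.ext h.symm)⟩
  have hconj := congrArg Subtype.val (hb (ConjAct.toConjAct g))
  rw [ConjAct.Subgroup.val_conj_smul, ConjAct.smul_def, ConjAct.ofConjAct_toConjAct] at hconj
  exact mul_inv_eq_iff_eq_mul.mp hconj

theorem Subgroup.normal_of_le_center {H : Subgroup G} (h : H ≤ center G) : H.Normal :=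
  ⟨fun n hn g => by rwa [mem_center_iff.mp (h hn) g, mul_inv_cancel_right]⟩

theorem Subgroup.isMulCommutative_sup_zpowers {A : Subgroup G} [IsMulCommutative A] {x : G}
    (hx : x ∈ centralizer (A : Set G)) : IsMulCommutative ↥(A ⊔ zpowers x) := by
  rw [← A.closure_eq, zpowers_eq_closure, ← closure_union]
  refine isMulCommutative_closure fun y hy z hz => ?_
  rcases hy with hy | rfl <;> rcases hz with hz | rfl
  · exact setLike_mul_comm hy hz
  · exact mem_centralizer_iff.mp hx y hy
  · exact (mem_centralizer_iff.mp hx z hz).symm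
  · rfl

theorem IsPGroup.centralizer_le_of_maximal {p : ℕ} [Fact p.Prime] [Finite G] (hG : IsPGroup p G)
    {A : Subgroup G} (hA : Maximal (fun B : Subgroup G => B.Normal ∧ IsMulCommutative B) A) :
    centralizer (A : Set G) ≤ A := by
  obtain ⟨⟨hAn, hAc⟩, hmax⟩ := hA
  by_contra hC
  have hN : (centralizer (A : Set G)).map (QuotientGroup.mk' A) ≠ ⊥ := by
    rwa [Ne, Subgroup.map_eq_bot_iff, QuotientGroup.ker_mk']
  have : ((centralizer (A : Set G)).map (QuotientGroup.mk' A)).Normal :=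
    (normal_centralizer (H := A)).map (QuotientGroup.mk' A) (QuotientGroup.mk'_surjective A)
  obtain ⟨_, ⟨x, hxC, rfl⟩, hxZ, hx1⟩ :=
    (hG.to_quotient A).exists_ne_one_mem_center_of_normal hN
  have hsup : A ⊔ zpowers x = (zpowers (QuotientGroup.mk' A x)).comap (QuotientGroup.mk' A) := by
    rw [← MonoidHom.map_zpowers, comap_map_eq, QuotientGroup.ker_mk', sup_comm]
  have hBn : (A ⊔ zpowers x).Normal :=
    hsup ▸ (normal_of_le_center (zpowers_le.mpr hxZ)).comap _
  have hxA : x ∈ A := hmax ⟨hBn, isMulCommutative_sup_zpowers hxC⟩ le_sup_left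
    (le_sup_right (a := A) (mem_zpowers x))
  exact hx1 ((QuotientGroup.eq_one_iff x).mpr hxA)

theorem IsPGroup.exists_normal_isMulCommutative_centralizer_le {p : ℕ} [Fact p.Prime] [Finite G]
    (hG : IsPGroup p G) :
    ∃ A : Subgroup G, A.Normal ∧ IsMulCommutative A ∧ centralizer (A : Set G) ≤ A := by
  obtain ⟨A, hA⟩ :=
    (Set.toFinite {B : Subgroup G | B.Normal ∧ IsMulCommutative B}).exists_maximal
      ⟨⊥, inferInstance, inferInstance⟩
  exact ⟨A, hA.1.1, hA.1.2, hG.centralizer_le_of_maximal hA⟩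

theorem MulAut.ker_conjNormal (H : Subgroup G) [H.Normal] :
    (MulAut.conjNormal : G →* MulAut H).ker = centralizer (H : Set G) := by
  ext g
  simp only [MonoidHom.mem_ker, mem_centralizer_iff, MulEquiv.ext_iff, MulAut.one_apply,
    Subtype.ext_iff, MulAut.conjNormal_apply, Subtype.forall, SetLike.mem_coe]
  exact forall₂_congr fun h _ => mul_inv_eq_iff_eq_mul.trans eq_comm

theorem card_mulAut_le_card_pow_rank (H : Type*) [Group H] [Finite H] :
    Nat.card (MulAut H) ≤ Nat.card H ^ Group.rank H := by
  obtain ⟨S, hS, hSgen⟩ := Group.rank_spec H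
  have hinj : Function.Injective fun (e : MulAut H) (s : S) => e s := fun e₁ e₂ h =>
    MulEquiv.toMonoidHom_injective <|
      MonoidHom.eq_of_eqOn_dense hSgen fun x hx => congrFun h ⟨x, hx⟩
  calc Nat.card (MulAut H) ≤ Nat.card (S → H) := Nat.card_le_card_of_injective _ hinj
    _ = Nat.card H ^ Group.rank H := by
      rw [Nat.card_fun, Nat.card_eq_fintype_card (α := S), Fintype.card_coe, hS]

theorem Subgroup.card_le_card_pow_rank_succ [Finite G] {A : Subgroup G} [A.Normal]
    (hA : centralizer (A : Set G) ≤ A) : Nat.card G ≤ Nat.card A ^ (Group.rank A + 1) := by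
  let f : G →* MulAut A := MulAut.conjNormal
  have : Finite (MulAut A) := Finite.of_injective _ DFunLike.coe_injective
  calc Nat.card G = Nat.card (G ⧸ f.ker) * Nat.card f.ker :=
        card_eq_card_quotient_mul_card_subgroup _
    _ ≤ Nat.card (MulAut A) * Nat.card A :=
        Nat.mul_le_mul (Nat.card_le_card_of_injective _ (QuotientGroup.kerLift_injective f))
          (card_le_of_le ((MulAut.ker_conjNormal A).trans_le hA))
    _ ≤ Nat.card A ^ Group.rank A * Nat.card A :=
        Nat.mul_le_mul_right _ (card_mulAut_le_card_pow_rank A)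
    _ = Nat.card A ^ (Group.rank A + 1) := (pow_succ _ _).symm

end

/-- **Theorem (order bound from rank and exponent).**
If `G` is a finite `p`-group with `rk(G) = r` (the maximum, over abelian subgroups `A` of `G`,
of the minimal number of generators of `A`) and exponent `p ^ d`, then `|G| ≤ p ^ (2 d r²)`. -/
theorem stmt_1 (p : ℕ) (hp : p.Prime) (G : Type*) [Group G] [Finite G]
    (hG : IsPGroup p G) (r d : ℕ)
    (hrank : IsGreatest {n | ∃ A : Subgroup G, IsMulCommutative A ∧ Group.rank A = n} r)
    (hexp : Monoid.exponent G = p ^ d) :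
    Nat.card G ≤ p ^ (2 * d * r ^ 2) := by
  have := Fact.mk hp
  obtain ⟨A, hAn, hAc, hAC⟩ := hG.exists_normal_isMulCommutative_centralizer_le
  have hrA : Group.rank A ≤ r := hrank.2 ⟨A, hAc, rfl⟩
  have hA : Nat.card A ≤ p ^ (d * r) := by
    have hexpA : ∀ a : A, a ^ p ^ d = 1 := fun a =>
      Subtype.ext (hexp ▸ Monoid.pow_exponent_eq_one (a : G))
    calc Nat.card A ≤ (p ^ d) ^ Group.rank A :=
          Nat.le_of_dvd (pow_pos (pow_pos hp.pos d) _)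
            (open scoped IsMulCommutative in card_dvd_exponent_pow_rank' A hexpA)
      _ ≤ p ^ (d * r) := by
          rw [← pow_mul]; exact Nat.pow_le_pow_right hp.pos (Nat.mul_le_mul_left d hrA)
  calc Nat.card G ≤ Nat.card A ^ (Group.rank A + 1) := card_le_card_pow_rank_succ hAC
    _ ≤ (p ^ (d * r)) ^ (r + 1) :=
        (Nat.pow_le_pow_right Nat.card_pos (Nat.succ_le_succ hrA)).trans (Nat.pow_le_pow_left hA _)
    _ = p ^ (d * r * (r + 1)) := (pow_mul _ _ _).symm
    _ ≤ p ^ (2 * d * r ^ 2) := Nat.pow_le_pow_right hp.pos <| by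
        nlinarith [Nat.mul_le_mul_left d (Nat.le_self_pow two_ne_zero r)]
end

section
/- Let p be a prime and suppose that B ⊴ Γ are finite p-groups with B abelian, such that the homomorphism Γ/B → Aut(B) induced by conjugation is injective (equivalently, the centraliser of B in Γ equals B). Let r = rk(B). Then α(Γ) ≥ |Γ/B|^(1/r); that is, every abelian subgroup A of Γ satisfies [Γ:A]^r ≥ [Γ:B]. -/
/-!
For `a ∈ A` the commutator map `b ↦ a b a⁻¹ b⁻¹` is an endomorphism of the abelian group `B`
that vanishes on `A ∩ B` and determines the conjugation action of `a` on `B`. As `Γ / B` acts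
faithfully on `B`, this gives `[A : A ∩ B] ≤ |Hom(B / (A ∩ B), B)|`. For a finite abelian group
`U`, induction on `|U|` along cyclic subgroups gives `|Hom(U, B)| ≤ |U| ^ rk(B)`, since
`|{b ∈ B | b ^ n = 1}| = |B / B ^ n| ≤ n ^ rk(B)`. Hence `[AB : B] ≤ [AB : A] ^ r`, and
multiplying by `[Γ : AB] ≤ [Γ : AB] ^ r` gives `[Γ : B] ≤ [Γ : A] ^ r`.
-/

open Subgroup

instance MonoidHom.instFinite {M N : Type*} [MulOneClass M] [MulOneClass N] [Finite M]
    [Finite N] : Finite (M →* N) :=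
  Finite.of_injective _ DFunLike.coe_injective

theorem card_ker_powMonoidHom_dvd {H : Type*} [CommGroup H] [Finite H] (n : ℕ) :
    Nat.card (powMonoidHom n : H →* H).ker ∣ n ^ Group.rank H := by
  set f : H →* H := powMonoidHom n
  have hcard : Nat.card f.ker = f.range.index := by
    have h := f.ker.card_mul_index
    rw [index_ker, ← f.range.card_mul_index, mul_comm] at h
    exact Nat.eq_of_mul_eq_mul_left Nat.card_pos h
  have hexp : ∀ x : H ⧸ f.range, x ^ n = 1 := by
    rintro ⟨x⟩
    exact (QuotientGroup.eq_one_iff _).mpr ⟨x, rfl⟩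
  rw [hcard, index_eq_card]
  exact (card_dvd_exponent_pow_rank' (H ⧸ f.range) hexp).trans <| pow_dvd_pow n <|
    Group.rank_le_of_surjective _ (QuotientGroup.mk'_surjective f.range)

theorem card_monoidHom_le_orderOf_pow_mul {U H : Type*} [CommGroup U] [Finite U] [CommGroup H]
    [Finite H] (u : U) :
    Nat.card (U →* H) ≤ orderOf u ^ Group.rank H * Nat.card (U ⧸ zpowers u →* H) := by
  let ev : (U →* H) →* H := MonoidHom.eval u
  have hrange : Nat.card ev.range ≤ orderOf u ^ Group.rank H := by
    refine (card_le_of_le ?_).trans (Nat.le_of_dvd (pow_pos (orderOf_pos u) _)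
      (card_ker_powMonoidHom_dvd (orderOf u)))
    rintro _ ⟨f, rfl⟩
    simp [ev, ← map_pow, pow_orderOf_eq_one]
  have hker : Nat.card ev.ker ≤ Nat.card (U ⧸ zpowers u →* H) := by
    refine Nat.card_le_card_of_injective
      (fun f => QuotientGroup.lift _ (f : U →* H) (zpowers_le.mpr f.2)) fun f g hfg => ?_
    ext x
    simpa using DFunLike.congr_fun hfg (x : U ⧸ zpowers u)
  calc Nat.card (U →* H) = Nat.card ev.range * Nat.card ev.ker := by
        rw [← index_ker, mul_comm, card_mul_index]
    _ ≤ _ := Nat.mul_le_mul hrange hker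

theorem card_monoidHom_le_pow_rank {U H : Type*} [CommGroup U] [Finite U] [CommGroup H]
    [Finite H] : Nat.card (U →* H) ≤ Nat.card U ^ Group.rank H := by
  induction h : Nat.card U using Nat.strong_induction_on generalizing U with
  | _ n ih =>
  rcases subsingleton_or_nontrivial U with hU | hU
  · rw [← h, Nat.card_of_subsingleton (1 : U), one_pow]
    exact Finite.card_le_one_iff_subsingleton.mpr inferInstance
  obtain ⟨u, hu⟩ := exists_ne (1 : U)
  have hcard : n = Nat.card (U ⧸ zpowers u) * orderOf u := by
    rw [← h, ← Nat.card_zpowers, card_eq_card_quotient_mul_card_subgroup]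
  have hlt : Nat.card (U ⧸ zpowers u) < n := by
    rw [hcard]
    exact lt_mul_right Nat.card_pos <|
      lt_of_le_of_ne (orderOf_pos u) (Ne.symm (orderOf_eq_one_iff.not.mpr hu))
  calc Nat.card (U →* H) ≤ orderOf u ^ Group.rank H * Nat.card (U ⧸ zpowers u →* H) :=
        card_monoidHom_le_orderOf_pow_mul u
    _ ≤ orderOf u ^ Group.rank H * Nat.card (U ⧸ zpowers u) ^ Group.rank H :=
        Nat.mul_le_mul_left _ (ih _ hlt rfl)
    _ = n ^ Group.rank H := by rw [hcard, mul_pow, mul_comm]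

theorem Subgroup.index_le_index_pow_of_relIndex_le {G : Type*} [Group G] {H K : Subgroup G}
    [K.Normal] (hH : H.index ≠ 0) {r : ℕ} (hr : r ≠ 0) (h : K.relIndex H ≤ H.relIndex K ^ r) :
    K.index ≤ H.index ^ r := by
  have hHsup : H.relIndex (H ⊔ K) * (H ⊔ K).index = H.index := relIndex_mul_index le_sup_left
  calc K.index = K.relIndex H * (H ⊔ K).index := by
        rw [← relIndex_sup_right, relIndex_mul_index le_sup_right]
    _ ≤ H.relIndex K ^ r * (H ⊔ K).index := Nat.mul_le_mul_right _ h
    _ ≤ H.relIndex (H ⊔ K) ^ r * (H ⊔ K).index ^ r := by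
        gcongr
        · exact relIndex_le_of_le_right le_sup_right (left_ne_zero_of_mul (hHsup ▸ hH))
        · exact Nat.le_self_pow hr _
    _ = H.index ^ r := by rw [← mul_pow, hHsup]

open scoped IsMulCommutative

theorem card_map_conjNormal_le_card_monoidHom {Γ : Type*} [Group Γ] {B : Subgroup Γ} [B.Normal]
    [IsMulCommutative B] [Finite B] (A : Subgroup Γ) [IsMulCommutative A] :
    Nat.card (A.map (MulAut.conjNormal : Γ →* MulAut B)) ≤ Nat.card (B ⧸ A.subgroupOf B →* B) := by
  have hfix : ∀ σ ∈ A.map (MulAut.conjNormal : Γ →* MulAut B), ∀ b ∈ A.subgroupOf B, σ b = b := by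
    rintro _ ⟨a, ha, rfl⟩ b hb
    ext
    rw [MulAut.conjNormal_apply, setLike_mul_comm ha (mem_subgroupOf.mp hb), mul_inv_cancel_right]
  refine Nat.card_le_card_of_injective (fun σ => QuotientGroup.lift _
    ((σ : MulAut B).toMonoidHom / MonoidHom.id B) fun b hb => ?_) fun σ τ hστ => ?_
  · simp [hfix σ σ.2 b hb]
  · ext b : 3
    simpa using DFunLike.congr_fun hστ (b : B ⧸ A.subgroupOf B)

theorem stmt_4_general (Γ : Type*) [Group Γ] [Finite Γ]
    (B : Subgroup Γ) [B.Normal] (hB : IsMulCommutative B)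
    (hker : (MulAut.conjNormal : Γ →* MulAut B).ker = B)
    (r : ℕ) (hr : r = Group.rank B)
    (A : Subgroup Γ) (hA : IsMulCommutative A) :
    B.index ≤ A.index ^ r := by
  obtain rfl | hr0 := eq_or_ne r 0
  · have : Subsingleton B := Group.rank_eq_zero_iff.mp hr.symm
    have hconj : (MulAut.conjNormal : Γ →* MulAut B) = 1 :=
      MonoidHom.ext fun _ => MulEquiv.ext fun _ => Subsingleton.elim _ _
    rw [← hker, MonoidHom.ker_eq_top_iff.mpr hconj, index_top, pow_zero]
  have key : B.relIndex A ≤ A.relIndex B ^ r :=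
    calc B.relIndex A = Nat.card (A.map (MulAut.conjNormal : Γ →* MulAut B)) := by
          rw [← relIndex_ker, hker]
      _ ≤ Nat.card (B ⧸ A.subgroupOf B →* B) := card_map_conjNormal_le_card_monoidHom A
      _ ≤ A.relIndex B ^ r := hr ▸ card_monoidHom_le_pow_rank
  exact index_le_index_pow_of_relIndex_le index_ne_zero_of_finite hr0 key

/-- **Theorem (lower bound for `α(Γ)`).**
Let `B ⊴ Γ` be finite `p`-groups with `B` abelian such that the conjugation homomorphism
`Γ/B → Aut(B)` is injective, i.e. the kernel of the conjugation map `Γ →* Aut(B)` is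
exactly `B` (equivalently, the centraliser of `B` in `Γ` is `B`). If `r = rk(B)`, then
`α(Γ) ≥ |Γ/B|^(1/r)`: every abelian subgroup `A` of `Γ` satisfies `[Γ:A]^r ≥ [Γ:B]`. -/
theorem stmt_4 (p : ℕ) (hp : p.Prime) (Γ : Type*) [Group Γ] [Finite Γ]
    (hΓ : IsPGroup p Γ) (B : Subgroup Γ) [B.Normal] (hB : IsMulCommutative B)
    (hker : (MulAut.conjNormal : Γ →* MulAut B).ker = B)
    (r : ℕ) (hr : r = Group.rank B)
    (A : Subgroup Γ) (hA : IsMulCommutative A) :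
    B.index ≤ A.index ^ r :=
  stmt_4_general Γ B hB hker r hr A hA
end

section
/- Let p be a prime and suppose that B ⊴ Γ are finite p-groups with B abelian, such that the homomorphism Γ/B → Aut(B) induced by conjugation is injective (equivalently, the centraliser of B in Γ equals B). Let r = rk(B). Then every abelian subgroup A of Γ satisfies [A : A ∩ B] ≤ [B : A ∩ B]^r. -/
/-!
For `a ∈ A` the map `b ↦ (a b a⁻¹) b⁻¹` is an endomorphism of the abelian group `B`, and it
kills `A ∩ B` because `A` is abelian. Since the centraliser of `B` is `B`, it determines `a`
modulo `A ∩ B`, so `[A : A ∩ B] ≤ |Hom(B/(A ∩ B), B)|`. Finally `|Hom(X, B)| ≤ |X|^r` for every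
finite group `X`: pass to the abelianisation and peel off cyclic subgroups, a cyclic group of
order `n` having `|B[n]| = |B/Bⁿ| ≤ nʳ` homomorphisms to `B`.
-/

open Subgroup

instance MonoidHom.finite {M N : Type*} [MulOneClass M] [MulOneClass N] [Finite M] [Finite N] :
    Finite (M →* N) :=
  Finite.of_injective _ DFunLike.coe_injective

section CommGroup

variable {B : Type*} [CommGroup B] [Finite B]

theorem card_powMonoidHom_ker_le {n : ℕ} (hn : n ≠ 0) :
    Nat.card (powMonoidHom n : B →* B).ker ≤ n ^ Group.rank B := by
  rw [← index_range, index]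
  have hexp : ∀ q : B ⧸ (powMonoidHom n : B →* B).range, q ^ n = 1 := by
    rintro ⟨b⟩
    exact (QuotientGroup.eq_one_iff _).mpr ⟨b, rfl⟩
  calc Nat.card (B ⧸ (powMonoidHom n : B →* B).range)
      ≤ n ^ Group.rank (B ⧸ (powMonoidHom n : B →* B).range) :=
        Nat.le_of_dvd (pow_pos (Nat.pos_of_ne_zero hn) _) (card_dvd_exponent_pow_rank' _ hexp)
    _ ≤ n ^ Group.rank B :=
        Nat.pow_le_pow_right (Nat.pos_of_ne_zero hn)
          (Group.rank_le_of_surjective _ (QuotientGroup.mk'_surjective _))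

theorem card_monoidHom_le_of_isCyclic (X : Type*) [Group X] [IsCyclic X] [Finite X] :
    Nat.card (X →* B) ≤ Nat.card X ^ Group.rank B := by
  obtain ⟨g, hg⟩ := IsCyclic.exists_generator (α := X)
  let eval : (X →* B) → (powMonoidHom (Nat.card X) : B →* B).ker :=
    fun f => ⟨f g, by simp [← map_pow, pow_card_eq_one']⟩
  have heval : Function.Injective eval := by
    intro f f' h
    ext x
    obtain ⟨k, rfl⟩ := mem_zpowers_iff.mp (hg x)
    simp only [map_zpow, show f g = f' g from congrArg Subtype.val h]
  exact (Nat.card_le_card_of_injective eval heval).trans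
    (card_powMonoidHom_ker_le Nat.card_pos.ne')

theorem card_monoidHom_le_mul_of_normal {X : Type*} [Group X] [Finite X] (N : Subgroup X)
    [N.Normal] : Nat.card (X →* B) ≤ Nat.card (X ⧸ N →* B) * Nat.card (N →* B) := by
  let restrict : (X →* B) →* (N →* B) := MonoidHom.compHom' N.subtype
  have hker :
      restrict.ker ≤ (MonoidHom.compHom' (QuotientGroup.mk' N) : (X ⧸ N →* B) →* _).range := by
    intro f hf
    exact ⟨QuotientGroup.lift N f fun n hn =>
      MonoidHom.mem_ker.mpr (DFunLike.congr_fun (MonoidHom.mem_ker.mp hf) ⟨n, hn⟩), rfl⟩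
  rw [← restrict.ker.card_mul_index, index_ker]
  exact Nat.mul_le_mul ((card_le_of_le hker).trans (Finite.card_range_le _))
    (card_le_card_group _)

theorem card_monoidHom_le_pow_of_commGroup (X : Type*) [CommGroup X] [Finite X] :
    Nat.card (X →* B) ≤ Nat.card X ^ Group.rank B := by
  induction h : Nat.card X using Nat.strong_induction_on generalizing X with
  | _ n ih =>
  subst h
  rcases subsingleton_or_nontrivial X with _ | _
  · rw [Nat.card_unique]
    exact Nat.one_le_pow _ _ Nat.card_pos
  obtain ⟨x, hx⟩ := exists_ne (1 : X)
  have hquot : Nat.card (X ⧸ zpowers x) < Nat.card X := by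
    have : 1 < Nat.card (zpowers x) := by
      rw [Nat.card_zpowers]
      exact lt_of_le_of_ne (orderOf_pos x) (Ne.symm (orderOf_eq_one_iff.not.mpr hx))
    rw [card_eq_card_quotient_mul_card_subgroup (zpowers x)]
    exact lt_mul_of_one_lt_right Nat.card_pos this
  calc Nat.card (X →* B) ≤ Nat.card (X ⧸ zpowers x →* B) * Nat.card (zpowers x →* B) :=
        card_monoidHom_le_mul_of_normal _
    _ ≤ Nat.card (X ⧸ zpowers x) ^ Group.rank B * Nat.card (zpowers x) ^ Group.rank B :=
        Nat.mul_le_mul (ih _ hquot _ rfl) (card_monoidHom_le_of_isCyclic _)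
    _ = Nat.card X ^ Group.rank B := by
        rw [← mul_pow, ← card_eq_card_quotient_mul_card_subgroup]

theorem card_monoidHom_le_pow (X : Type*) [Group X] [Finite X] :
    Nat.card (X →* B) ≤ Nat.card X ^ Group.rank B := calc
  Nat.card (X →* B) = Nat.card (Abelianization X →* B) := Nat.card_congr Abelianization.lift
  _ ≤ Nat.card (Abelianization X) ^ Group.rank B := card_monoidHom_le_pow_of_commGroup _
  _ ≤ Nat.card X ^ Group.rank B :=
      Nat.pow_le_pow_left (Nat.card_le_card_of_surjective _ (QuotientGroup.mk'_surjective _)) _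

end CommGroup

theorem MulAut.card_le_card_monoidHom_quotient_of_fixed {B : Type*} [CommGroup B] [Finite B]
    (S : Set (MulAut B)) (C : Subgroup B) (hS : ∀ σ ∈ S, ∀ c ∈ C, σ c = c) :
    Nat.card S ≤ Nat.card (B ⧸ C →* B) := by
  let δ : S → (B ⧸ C →* B) := fun σ =>
    QuotientGroup.lift C ((σ : MulAut B).toMonoidHom / MonoidHom.id B) fun c hc => by
      simp [hS σ σ.2 c hc]
  refine Nat.card_le_card_of_injective δ fun σ τ h => Subtype.ext (MulEquiv.ext fun b => ?_)
  simpa [δ] using DFunLike.congr_fun h (b : B ⧸ C)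

theorem stmt_5_general (Γ : Type*) [Group Γ] [Finite Γ]
    (B : Subgroup Γ) [B.Normal] (hB : IsMulCommutative B)
    (hker : (MulAut.conjNormal : Γ →* MulAut B).ker = B)
    (r : ℕ) (hr : r = Group.rank B)
    (A : Subgroup Γ) (hA : IsMulCommutative A) :
    (A ⊓ B).relIndex A ≤ ((A ⊓ B).relIndex B) ^ r := by
  have hfix : ∀ σ ∈ A.map MulAut.conjNormal, ∀ c ∈ (A ⊓ B).subgroupOf B, σ c = c := by
    rintro _ ⟨a, ha, rfl⟩ c hc
    ext
    rw [MulAut.conjNormal_apply, setLike_mul_comm ha (mem_subgroupOf.mp hc).1,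
      mul_inv_cancel_right]
  subst hr
  calc (A ⊓ B).relIndex A = Nat.card (A.map MulAut.conjNormal) := by
        rw [inf_relIndex_left, ← relIndex_ker, hker]
    _ ≤ Nat.card (B ⧸ (A ⊓ B).subgroupOf B →* B) := by
        open scoped IsMulCommutative in
        exact MulAut.card_le_card_monoidHom_quotient_of_fixed _ _ hfix
    _ ≤ (A ⊓ B).relIndex B ^ Group.rank B := by
        open scoped IsMulCommutative in
        exact card_monoidHom_le_pow _

/-- **Theorem.**
Let `B ⊴ Γ` be finite `p`-groups with `B` abelian such that the conjugation homomorphism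
`Γ/B → Aut(B)` is injective, i.e. the kernel of the conjugation map `Γ →* Aut(B)` is
exactly `B` (equivalently, the centraliser of `B` in `Γ` is `B`). If `r = rk(B)`, then
every abelian subgroup `A` of `Γ` satisfies `[A : A ∩ B] ≤ [B : A ∩ B]^r`. -/
theorem stmt_5 (p : ℕ) (hp : p.Prime) (Γ : Type*) [Group Γ] [Finite Γ]
    (hΓ : IsPGroup p Γ) (B : Subgroup Γ) [B.Normal] (hB : IsMulCommutative B)
    (hker : (MulAut.conjNormal : Γ →* MulAut B).ker = B)
    (r : ℕ) (hr : r = Group.rank B)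
    (A : Subgroup Γ) (hA : IsMulCommutative A) :
    (A ⊓ B).relIndex A ≤ ((A ⊓ B).relIndex B) ^ r :=
  stmt_5_general Γ B hB hker r hr A hA
end

section
/- Let p be a prime, let B be a finite abelian p-group with r = rk(B), and let k ≥ 1 be a natural number. Let A ⊆ B be a subgroup invariant under Aut_{(k)}(B). If [B : A] > p^(r·(k−1)), then there exists an element h ∈ B whose class in the quotient B/A has order exactly p^k and is fixed by the action induced on B/A by every element of Aut_{(k)}(B) (i.e., φ(h)·h⁻¹ ∈ A for every φ ∈ Aut_{(k)}(B)). -/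
/-- The subgroup of `p ^ k`-th powers of a (multiplicatively written) commutative group. -/
def pkPowers (p k : ℕ) (B : Type*) [CommGroup B] : Subgroup B :=
  (powMonoidHom (p ^ k) : B →* B).range

/-- `Aut_{(k)}(B)`: the subgroup of `Aut(B)` consisting of those automorphisms `φ` such that
`φ g * g⁻¹` is a `p ^ k`-th power for every `g ∈ B`. -/
def autk (p k : ℕ) (B : Type*) [CommGroup B] : Subgroup (MulAut B) where
  carrier := {φ : MulAut B | ∀ g : B, φ g * g⁻¹ ∈ pkPowers p k B}
  one_mem' := by
    intro g
    simpa using (pkPowers p k B).one_mem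
  mul_mem' := by
    intro a b ha hb g
    have h : (a * b) g * g⁻¹ = a (b g) * (b g)⁻¹ * (b g * g⁻¹) := by
      rw [MulAut.mul_apply]; group
    rw [h]
    exact mul_mem (ha (b g)) (hb g)
  inv_mem' := by
    intro a ha g
    have h := ha (a⁻¹ g)
    rw [MulAut.apply_inv_self] at h
    simpa [mul_inv_rev] using inv_mem h

/-- **Theorem (invariant element of order `p ^ k` in the quotient).**
Let `B` be a finite abelian `p`-group with `r = rk(B)`, let `k ≥ 1`, and let `A ⊆ B` be an
`Aut_{(k)}(B)`-invariant subgroup. If `[B : A] > p ^ (r (k - 1))`, then there is an `h ∈ B`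
whose class in `B/A` has order exactly `p ^ k` and is fixed by the action induced on `B/A`
by every element of `Aut_{(k)}(B)`, i.e. `φ h * h⁻¹ ∈ A` for every `φ ∈ Aut_{(k)}(B)`. -/
theorem stmt_8 (p : ℕ) (hp : p.Prime) (B : Type*) [CommGroup B] [Finite B]
    (hB : IsPGroup p B) (r : ℕ) (hr : r = Group.rank B) (k : ℕ) (hk : 1 ≤ k)
    (A : Subgroup B) (hinv : ∀ φ ∈ autk p k B, A.map φ.toMonoidHom = A)
    (hidx : p ^ (r * (k - 1)) < A.index) :
    ∃ h : B, orderOf (QuotientGroup.mk h : B ⧸ A) = p ^ k ∧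
      ∀ φ ∈ autk p k B, φ h * h⁻¹ ∈ A := by
  have hpFact : Fact p.Prime := ⟨hp⟩
  have hp1 : 1 < p := hp.one_lt
  -- The quotient is a p-group
  have hQp : IsPGroup p (B ⧸ A) := hB.to_quotient A
  obtain ⟨n, hn⟩ := IsPGroup.iff_card.mp hQp
  -- exponent of quotient is a power of p
  have : Fintype (B ⧸ A) := Fintype.ofFinite _
  have hexp_dvd : Monoid.exponent (B ⧸ A) ∣ p ^ n := by
    rw [← hn, Nat.card_eq_fintype_card]
    exact Group.exponent_dvd_card
  obtain ⟨m, hm, hexp⟩ := (Nat.dvd_prime_pow hp).mp hexp_dvd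
  -- rank of quotient ≤ r
  have hrank : Group.rank (B ⧸ A) ≤ r := by
    rw [hr]
    exact Group.rank_le_of_surjective (QuotientGroup.mk' A) (QuotientGroup.mk'_surjective A)
  -- card of quotient divides exponent ^ rank
  have hcard_dvd : Nat.card (B ⧸ A) ∣ Monoid.exponent (B ⧸ A) ^ Group.rank (B ⧸ A) :=
    card_dvd_exponent_pow_rank (B ⧸ A)
  have hindex : A.index = Nat.card (B ⧸ A) := rfl
  -- show k ≤ m
  have hkm : k ≤ m := by
    by_contra hlt
    push_neg at hlt
    have hm1 : m ≤ k - 1 := Nat.le_sub_one_of_lt hlt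
    have : A.index ≤ p ^ (r * (k - 1)) := by
      have h1 : Nat.card (B ⧸ A) ∣ p ^ (m * Group.rank (B ⧸ A)) := by
        rw [pow_mul]
        simpa [hexp] using hcard_dvd
      have h2 : Nat.card (B ⧸ A) ≤ p ^ (m * Group.rank (B ⧸ A)) :=
        Nat.le_of_dvd (pow_pos (by omega) _) h1
      rw [hindex]
      refine h2.trans (Nat.pow_le_pow_right (by omega) ?_)
      calc m * Group.rank (B ⧸ A) ≤ (k - 1) * r :=
            Nat.mul_le_mul hm1 hrank
        _ = r * (k - 1) := Nat.mul_comm _ _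
    omega
  -- element of the quotient of order p ^ m
  obtain ⟨g, hg⟩ := Monoid.exists_orderOf_eq_exponent (Monoid.ExponentExists.of_finite (G := B ⧸ A))
  obtain ⟨y, rfl⟩ := QuotientGroup.mk_surjective g
  refine ⟨y ^ p ^ (m - k), ?_, ?_⟩
  · have : (QuotientGroup.mk (y ^ p ^ (m - k)) : B ⧸ A)
        = (QuotientGroup.mk y : B ⧸ A) ^ p ^ (m - k) := rfl
    rw [this, orderOf_pow, hg, hexp]
    have hdvd : p ^ (m - k) ∣ p ^ m := Nat.pow_dvd_pow p (Nat.sub_le m k)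
    rw [Nat.gcd_eq_right hdvd, Nat.pow_div (Nat.sub_le m k) (by omega),
      Nat.sub_sub_self hkm]
  · intro φ hφ
    obtain ⟨c, hc⟩ := hφ y
    have key : φ (y ^ p ^ (m - k)) * (y ^ p ^ (m - k))⁻¹ = c ^ p ^ m := by
      rw [map_pow, ← inv_pow, ← mul_pow, ← hc, powMonoidHom_apply, ← pow_mul, ← pow_add,
        Nat.add_sub_cancel' hkm]
    rw [key, ← QuotientGroup.eq_one_iff]
    have : (QuotientGroup.mk (c ^ p ^ m) : B ⧸ A)
        = (QuotientGroup.mk c : B ⧸ A) ^ p ^ m := rfl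
    rw [this, ← hexp]
    exact Monoid.pow_exponent_eq_one _
end

section
/- (Jordan's theorem) For every natural number n there exists a constant C = Jor_n such that every finite subgroup G of GL(n, ℝ) contains an abelian subgroup A with index [G : A] ≤ C. -/
/-!
Averaging `gᴴ g` over a finite subgroup `G` of `GL(n, ℝ)` gives a positive definite `T`, and
conjugating by `√T` makes every element of `G` orthogonal. So `G` may be viewed as a group of
operators of norm `≤ 1`. For such a group, `‖⁅a, b⁆ - 1‖ ≤ 2 ‖a - 1‖ ‖b - 1‖`, and a
minimal-counterexample argument shows that the elements within `1/4` of the identity commute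
pairwise; they generate an abelian subgroup `A`. Representatives of distinct cosets of `A` are
more than `1/8` apart in the unit ball, so `[G : A]` is at most the `1/8`-packing number of the
unit ball of `End(ℝⁿ)`, which is finite and depends only on `n`.
-/

open Metric
open scoped NNReal ENNReal commutatorElement

theorem eq_one_of_pow_eq_one_of_forall_norm_pow_sub_one_lt {R : Type*} [NormedRing R]
    [NormedAlgebra ℝ R] {x : R} {m : ℕ} (hm : 0 < m) (hx : x ^ m = 1)
    (h : ∀ k, ‖x ^ k - 1‖ < 1) : x = 1 := by
  by_contra hne
  have hpos : 0 < ‖x - 1‖ := norm_pos_iff.2 (sub_ne_zero.2 hne)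
  have key : m • (x - 1) = ∑ j ∈ Finset.range m, (1 - x ^ j) * (x - 1) := by
    rw [← Finset.sum_mul, Finset.sum_sub_distrib, sub_mul, geom_sum_mul, hx, sub_self, sub_zero,
      Finset.sum_const, Finset.card_range, smul_mul_assoc, one_mul]
  have : (m : ℝ) * ‖x - 1‖ < m * ‖x - 1‖ :=
    calc (m : ℝ) * ‖x - 1‖ = ‖m • (x - 1)‖ := by rw [RCLike.norm_nsmul ℝ, nsmul_eq_mul]
      _ ≤ ∑ j ∈ Finset.range m, ‖(1 - x ^ j) * (x - 1)‖ := key ▸ norm_sum_le _ _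
      _ < ∑ _j ∈ Finset.range m, ‖x - 1‖ :=
        Finset.sum_lt_sum_of_nonempty (Finset.nonempty_range_iff.2 hm.ne') fun j _ =>
          (norm_mul_le _ _).trans_lt <| mul_lt_of_lt_one_left hpos <| norm_sub_rev (x ^ j) 1 ▸ h j
      _ = m * ‖x - 1‖ := by simp
  exact lt_irrefl _ this

theorem commutatorElement_pow_right_of_commute {G : Type*} [Group G] {a b : G}
    (h : Commute ⁅a, b⁆ b) (k : ℕ) : ⁅a, b ^ k⁆ = ⁅a, b⁆ ^ k := by
  induction k with
  | zero => simp
  | succ k ih =>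
    rw [pow_succ', commutatorElement_mul_right_eq_mul_conj, ih, mul_assoc _ b, ← (h.pow_left k).eq,
      mul_assoc, mul_inv_cancel_right, pow_succ']

section ContractingRepresentation

variable {G R : Type*} [Group G] [NormedRing R]

theorem norm_map_inv_mul_sub_one_le {v : G →* R} (hv : ∀ g, ‖v g‖ ≤ 1) (a b : G) :
    ‖v (a⁻¹ * b) - 1‖ ≤ dist (v a) (v b) :=
  calc ‖v (a⁻¹ * b) - 1‖ = ‖v a⁻¹ * (v b - v a)‖ := by
        rw [mul_sub, ← map_mul, ← map_mul, inv_mul_cancel, map_one]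
    _ ≤ ‖v a⁻¹‖ * ‖v b - v a‖ := norm_mul_le _ _
    _ ≤ dist (v a) (v b) := by
        rw [dist_comm, dist_eq_norm]; exact mul_le_of_le_one_left (norm_nonneg _) (hv _)

theorem norm_map_commutatorElement_sub_one_le {v : G →* R} (hv : ∀ g, ‖v g‖ ≤ 1) (a b : G) :
    ‖v ⁅a, b⁆ - 1‖ ≤ 2 * ‖v a - 1‖ * ‖v b - 1‖ := by
  have hab : v ⁅a, b⁆ = v a * v b * v (a⁻¹ * b⁻¹) := by
    rw [← map_mul, ← map_mul]; congr 1; group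
  have hba : (1 : R) = v b * v a * v (a⁻¹ * b⁻¹) := by
    rw [← map_mul, ← map_mul, ← map_one v]; congr 1; group
  have key : v ⁅a, b⁆ - 1 = (v a * v b - v b * v a) * v (a⁻¹ * b⁻¹) := by
    rw [sub_mul, ← hab, ← hba]
  calc ‖v ⁅a, b⁆ - 1‖
      = ‖((v a - 1) * (v b - 1) - (v b - 1) * (v a - 1)) * v (a⁻¹ * b⁻¹)‖ := by
        rw [key]; congr 2; noncomm_ring
    _ ≤ ‖(v a - 1) * (v b - 1) - (v b - 1) * (v a - 1)‖ :=
        (norm_mul_le _ _).trans (mul_le_of_le_one_right (norm_nonneg _) (hv _))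
    _ ≤ ‖v a - 1‖ * ‖v b - 1‖ + ‖v b - 1‖ * ‖v a - 1‖ :=
        (norm_sub_le _ _).trans (add_le_add (norm_mul_le _ _) (norm_mul_le _ _))
    _ = 2 * ‖v a - 1‖ * ‖v b - 1‖ := by ring

theorem Subgroup.index_le_packingNumber {v : G →* R} (hv : ∀ g, ‖v g‖ ≤ 1) (H : Subgroup G)
    {ε : ℝ≥0} (hH : ∀ g, ‖v g - 1‖ ≤ ε → g ∈ H) :
    (H.index : ℕ∞) ≤ packingNumber ε (closedBall (0 : R) 1) := by
  rcases finite_or_infinite (G ⧸ H) with _ | _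
  · let f : G ⧸ H → R := fun q => v q.out
    have hsep : ∀ q q', q ≠ q' → (ε : ℝ≥0∞) < edist (f q) (f q') := by
      intro q q' hne
      rw [edist_nndist, ENNReal.coe_lt_coe, ← NNReal.coe_lt_coe, coe_nndist]
      by_contra hle
      refine hne ?_
      rw [← q.out_eq', ← q'.out_eq', QuotientGroup.eq]
      exact hH _ ((norm_map_inv_mul_sub_one_le hv _ _).trans (not_lt.1 hle))
    have hf : Function.Injective f := fun q q' h => by
      by_contra hne
      simpa [h] using hsep q q' hne
    calc (H.index : ℕ∞) = ENat.card (G ⧸ H) := (ENat.card_eq_coe_natCard _).symm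
      _ ≤ (Set.range f).encard := hf.encard_range
      _ ≤ packingNumber ε (closedBall (0 : R) 1) := by
        refine IsSeparated.encard_le_packingNumber ?_ ?_
        · rintro _ ⟨q, rfl⟩
          simpa using hv _
        · rintro _ ⟨q, rfl⟩ _ ⟨q', rfl⟩ hne
          exact hsep q q' (ne_of_apply_ne f hne)
  · simp [Subgroup.index]

variable [Finite G] [NormedAlgebra ℝ R]

theorem commutatorElement_eq_one_of_norm_map_sub_one_lt {v : G →* R} (hv : ∀ g, ‖v g‖ ≤ 1)
    (hinj : Function.Injective v) {a b : G} (ha : ‖v a - 1‖ < 1 / 4) (h : Commute ⁅a, b⁆ b) :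
    ⁅a, b⁆ = 1 := by
  have hbound : ∀ g, ‖v g - 1‖ ≤ 2 := fun g =>
    (norm_sub_le _ _).trans (by linarith [hv g, show ‖(1 : R)‖ ≤ 1 by simpa using hv 1])
  apply hinj
  rw [map_one]
  refine eq_one_of_pow_eq_one_of_forall_norm_pow_sub_one_lt (orderOf_pos ⁅a, b⁆)
    (by rw [← map_pow, pow_orderOf_eq_one, map_one]) fun k => ?_
  rw [← map_pow, ← commutatorElement_pow_right_of_commute h]
  calc ‖v ⁅a, b ^ k⁆ - 1‖ ≤ 2 * ‖v a - 1‖ * ‖v (b ^ k) - 1‖ :=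
        norm_map_commutatorElement_sub_one_le hv a _
    _ ≤ 2 * ‖v a - 1‖ * 2 := by gcongr; exact hbound _
    _ < 1 := by linarith

theorem commute_of_norm_map_sub_one_lt {v : G →* R} (hv : ∀ g, ‖v g‖ ≤ 1)
    (hinj : Function.Injective v) {a b : G} (ha : ‖v a - 1‖ < 1 / 4) (hb : ‖v b - 1‖ < 1 / 4) :
    Commute a b := by
  by_contra hab
  obtain ⟨b₀, ⟨hb₀, a₀, ha₀, hab₀⟩, hmin⟩ := Set.exists_min_image
    {b | ‖v b - 1‖ < 1 / 4 ∧ ∃ a, ‖v a - 1‖ < 1 / 4 ∧ ¬Commute a b} (fun b => ‖v b - 1‖)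
    (Set.toFinite _) ⟨b, hb, a, ha, hab⟩
  have hpos : 0 < ‖v b₀ - 1‖ := norm_pos_iff.2 fun h => hab₀ <| by
    rw [sub_eq_zero, ← map_one v] at h
    exact hinj h ▸ Commute.one_right a₀
  have hc : ‖v ⁅a₀, b₀⁆ - 1‖ < ‖v b₀ - 1‖ :=
    (norm_map_commutatorElement_sub_one_le hv a₀ b₀).trans_lt (by nlinarith)
  -- `⁅a₀, b₀⁆` is closer to `1` than `b₀`, so minimality of `b₀` forces it to commute with `b₀`.
  have hcomm : Commute ⁅a₀, b₀⁆ b₀ := by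
    by_contra h
    exact (hmin _ ⟨hc.trans hb₀, b₀, hb₀, fun h' => h h'.symm⟩).not_gt hc
  exact hab₀ (commutatorElement_eq_one_iff_commute.1
    (commutatorElement_eq_one_of_norm_map_sub_one_lt hv hinj ha₀ hcomm))

theorem exists_isMulCommutative_index_le_packingNumber {v : G →* R} (hv : ∀ g, ‖v g‖ ≤ 1)
    (hinj : Function.Injective v) :
    ∃ A : Subgroup G, IsMulCommutative A ∧
      (A.index : ℕ∞) ≤ packingNumber (1 / 8) (closedBall (0 : R) 1) :=
  ⟨Subgroup.closure {g | ‖v g - 1‖ < 1 / 4},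
    Subgroup.isMulCommutative_closure fun _ ha _ hb =>
      commute_of_norm_map_sub_one_lt hv hinj ha hb,
    Subgroup.index_le_packingNumber hv _ fun _ hg => Subgroup.subset_closure <|
      hg.trans_lt (by norm_num)⟩

end ContractingRepresentation

theorem Metric.packingNumber_ne_top_of_isCompact {X : Type*} [PseudoEMetricSpace X] {A : Set X}
    (hA : IsCompact A) {ε : ℝ≥0} (hε : ε ≠ 0) : packingNumber ε A ≠ ⊤ := by
  obtain ⟨N, -, hN, hcover⟩ := exists_finite_isCover_of_isCompact (ε := ε / 2) (by simpa) hA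
  refine ne_top_of_le_ne_top hN.encard_lt_top.ne ?_
  calc packingNumber ε A = packingNumber (2 * (ε / 2)) A := by rw [mul_div_cancel₀ _ two_ne_zero]
    _ ≤ externalCoveringNumber (ε / 2) A := packingNumber_two_mul_le_externalCoveringNumber _ _
    _ ≤ N.encard := hcover.externalCoveringNumber_le_encard

section UnitaryTrick

open Matrix
open scoped MatrixOrder ComplexOrder

variable {ι 𝕜 : Type*} [Fintype ι] [DecidableEq ι] [RCLike 𝕜]

theorem Matrix.exists_conj_mem_unitaryGroup (G : Subgroup (GL ι 𝕜)) [Finite G] :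
    ∃ P : GL ι 𝕜, ∀ g ∈ G, ((P * g * P⁻¹ : GL ι 𝕜) : Matrix ι ι 𝕜) ∈ unitaryGroup ι 𝕜 := by
  have := Fintype.ofFinite G
  set T : Matrix ι ι 𝕜 := ∑ g : G, ((g : GL ι 𝕜) : Matrix ι ι 𝕜)ᴴ * (g : GL ι 𝕜) with hT_def
  have hT : T.PosDef := by
    rw [hT_def, ← Finset.add_sum_erase _ _ (Finset.mem_univ (1 : G))]
    convert PosDef.one.add_posSemidef (posSemidef_sum _ fun (g : G) _ =>
      posSemidef_conjTranspose_mul_self ((g : GL ι 𝕜) : Matrix ι ι 𝕜))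
    simp
  have hT_inv : ∀ g ∈ G, (g : Matrix ι ι 𝕜)ᴴ * T * g = T := by
    intro g hg
    rw [Finset.mul_sum, Finset.sum_mul]
    refine Fintype.sum_equiv (Equiv.mulRight ⟨g, hg⟩) _ _ fun h => ?_
    simp [Matrix.mul_assoc]
  set S := CFC.sqrt T
  have hTS : T = Sᴴ * S := by
    rw [(CFC.sqrt_nonneg T).posSemidef.isHermitian.eq,
      CFC.sqrt_mul_sqrt_self T hT.posSemidef.nonneg]
  obtain ⟨P, hP⟩ : IsUnit S := (CFC.isUnit_sqrt_iff T hT.posSemidef.nonneg).2 hT.isUnit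
  refine ⟨P, fun g hg => ?_⟩
  set Q : Matrix ι ι 𝕜 := ↑P⁻¹
  have hSQ : S * Q = 1 := by rw [← hP, Units.mul_inv]
  rw [mem_unitaryGroup_iff', Units.val_mul, Units.val_mul, hP, star_eq_conjTranspose]
  set M : Matrix ι ι 𝕜 := ↑g
  calc (S * M * Q)ᴴ * (S * M * Q) = Qᴴ * (Mᴴ * T * M) * Q := by
        simp only [hTS, conjTranspose_mul, Matrix.mul_assoc]
    _ = (S * Q)ᴴ * (S * Q) := by
        rw [hT_inv g hg, hTS]; simp only [conjTranspose_mul, Matrix.mul_assoc]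
    _ = 1 := by rw [hSQ, conjTranspose_one, Matrix.one_mul]

theorem Matrix.exists_injective_monoidHom_norm_le_one (G : Subgroup (GL ι 𝕜)) [Finite G] :
    ∃ v : G →* (EuclideanSpace 𝕜 ι →L[𝕜] EuclideanSpace 𝕜 ι),
      Function.Injective v ∧ ∀ g, ‖v g‖ ≤ 1 := by
  obtain ⟨P, hP⟩ := exists_conj_mem_unitaryGroup G
  let v := MonoidHomClass.toMonoidHom (toEuclideanCLM (𝕜 := 𝕜) (n := ι)) |>.comp
    ((Units.coeHom _).comp ((MulAut.conj P).toMonoidHom.comp G.subtype))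
  have hv_apply : ∀ g : G, v g = toEuclideanCLM (𝕜 := 𝕜) ((P * g * P⁻¹ : GL ι 𝕜) : Matrix ι ι 𝕜) :=
    fun _ => rfl
  refine ⟨v, fun g h hgh => ?_, fun g => ?_⟩
  · rw [hv_apply, hv_apply] at hgh
    exact Subtype.ext <| mul_left_cancel <| mul_right_cancel <| Units.ext <|
      (toEuclideanCLM (𝕜 := 𝕜) (n := ι)).injective hgh
  have hU : v g ∈ unitary _ :=
    hv_apply g ▸ Unitary.map_mem (toEuclideanCLM (𝕜 := 𝕜) (n := ι)) (hP g g.2)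
  calc ‖v g‖ = ‖v g * 1‖ := by rw [mul_one]
    _ = ‖(1 : EuclideanSpace 𝕜 ι →L[𝕜] EuclideanSpace 𝕜 ι)‖ :=
        CStarRing.norm_mem_unitary_mul 1 hU
    _ ≤ 1 := ContinuousLinearMap.norm_id_le

end UnitaryTrick

/-- **Jordan's theorem.** For every natural number `n` there is a constant `C` such that
every finite subgroup `G` of `GL(n, ℝ)` contains an abelian subgroup `A` with
`[G : A] ≤ C`. -/
theorem stmt_10 (n : ℕ) :
    ∃ C : ℕ, ∀ G : Subgroup (Matrix.GeneralLinearGroup (Fin n) ℝ), Finite G →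
      ∃ A : Subgroup G, IsMulCommutative A ∧ A.index ≤ C := by
  set E := EuclideanSpace ℝ (Fin n)
  have hfin := packingNumber_ne_top_of_isCompact (isCompact_closedBall (0 : E →L[ℝ] E) 1)
    (ε := 1 / 8) (by norm_num)
  refine ⟨(packingNumber (1 / 8) (closedBall (0 : E →L[ℝ] E) 1)).toNat, fun G _ => ?_⟩
  obtain ⟨v, hinj, hv⟩ := Matrix.exists_injective_monoidHom_norm_le_one G
  obtain ⟨A, hA, hindex⟩ := exists_isMulCommutative_index_le_packingNumber hv hinj
  exact ⟨A, hA, by simpa using ENat.toNat_le_toNat hindex hfin⟩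
end

section
/- Every finite abelian subgroup A of GL(n, ℂ) can be generated by n or fewer elements. -/
/-!
Each element of a finite abelian group `A ≤ GL(n, ℂ)` has finite order, hence is semisimple, and
the elements commute, so `ℂⁿ` is the direct sum of the joint eigenspaces of `A`. There are at most
`n` nonzero ones, `A` acts on each through a character `A → ℂˣ`, and these characters separate the
points of `A`. Finite subgroups of `ℂˣ` are cyclic, so one generator for the image of a character
together with generators of its kernel (by induction on the number of characters) generate `A`.
-/

open Function Module

namespace Subgroup

variable {G : Type*} [Group G]

theorem closure_insert_eq_of_closure_eq_inf_ker {C : Type*} [Group C] (f : G →* C)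
    {H : Subgroup G} {T : Set G} (hT : closure T = H ⊓ f.ker) {g : G} (hg : g ∈ H)
    (hgen : H.map f ≤ zpowers (f g)) : closure (insert g T) = H := by
  refine le_antisymm (closure_le _ |>.mpr <| Set.insert_subset hg ?_) fun x hx ↦ ?_
  · exact (subset_closure.trans hT.le).trans fun _ h ↦ h.1
  obtain ⟨k, hk⟩ := mem_zpowers_iff.mp (hgen (mem_map_of_mem f hx))
  have hquot : x * (g ^ k)⁻¹ ∈ closure T :=
    hT ▸ mem_inf.mpr ⟨mul_mem hx (inv_mem (zpow_mem hg k)), by simp [hk]⟩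
  simpa using mul_mem (closure_mono (Set.subset_insert g T) hquot)
    (zpow_mem (subset_closure (Set.mem_insert g T)) k)

theorem exists_finset_card_le_closure_eq_of_inf_iInf_ker_eq_bot [Finite G]
    {R : Type*} [CommRing R] [IsDomain R] (s : Finset (G →* Rˣ)) (H : Subgroup G)
    (hH : H ⊓ ⨅ ψ ∈ s, ψ.ker = ⊥) :
    ∃ S : Finset G, S.card ≤ s.card ∧ closure (S : Set G) = H := by
  classical
  induction s using Finset.induction_on generalizing H with
  | empty => exact ⟨∅, by simp, by simpa using hH.symm⟩
  | insert ψ s hψ ih =>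
    obtain ⟨S, hS_card, hS⟩ := ih (H ⊓ ψ.ker) (by rwa [Finset.iInf_insert, ← inf_assoc] at hH)
    have := Finite.of_surjective _ (ψ.subgroupMap_surjective H)
    obtain ⟨⟨_, g, hg, rfl⟩, hgen⟩ := IsCyclic.exists_generator (α := H.map ψ)
    refine ⟨insert g S, ?_, ?_⟩
    · grind [Finset.card_insert_le, Finset.card_insert_of_notMem]
    · rw [Finset.coe_insert]
      refine closure_insert_eq_of_closure_eq_inf_ker ψ hS hg fun y hy ↦ ?_
      obtain ⟨k, hk⟩ := mem_zpowers_iff.mp (hgen ⟨y, hy⟩)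
      exact mem_zpowers_iff.mpr ⟨k, congrArg Subtype.val hk⟩

end Subgroup

namespace Module.End

variable {K V : Type*} [Field K] [AddCommGroup V] [Module K V]

theorem isSemisimple_of_pow_eq_one {f : End K V} {k : ℕ} (hk : (k : K) ≠ 0) (hf : f ^ k = 1) :
    f.IsSemisimple :=
  isSemisimple_of_squarefree_aeval_eq_zero
    (Polynomial.X_pow_sub_one_separable_iff.mpr hk).squarefree (by simp [hf])

section Commuting

variable {ι : Type*} {f : ι → End K V} (hf : ∀ i j, Commute (f i) (f j))
include hf

theorem iSupIndep_iInf_eigenspace_of_commute :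
    iSupIndep fun χ : ι → K ↦ ⨅ i, (f i).eigenspace (χ i) :=
  (independent_iInf_maxGenEigenspace_of_forall_mapsTo f
    fun i j μ ↦ mapsTo_maxGenEigenspace_of_comm (hf j i) μ).mono
    fun _ ↦ iInf_mono fun _ ↦ eigenspace_le_maxGenEigenspace

theorem iSup_iInf_eigenspace_eq_top_of_commute [IsAlgClosed K] [FiniteDimensional K V]
    (hs : ∀ i, (f i).IsSemisimple) :
    ⨆ χ : ι → K, ⨅ i, (f i).eigenspace (χ i) = ⊤ := by
  simpa only [fun i ↦ (hs i).isFinitelySemisimple.maxGenEigenspace_eq_eigenspace] using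
    iSup_iInf_maxGenEigenspace_eq_top_of_iSup_maxGenEigenspace_eq_top_of_commute f
      (fun i j _ ↦ hf i j) fun i ↦ iSup_maxGenEigenspace_eq_top (f i)

end Commuting

end Module.End

namespace MonoidHom

variable {A K V : Type*} [Group A] [Field K] [AddCommGroup V] [Module K V]
  (ρ : A →* End K V)

theorem exists_monoidHom_of_iInf_eigenspace_ne_bot {χ : A → K}
    (h : ⨅ a, (ρ a).eigenspace (χ a) ≠ ⊥) : ∃ ψ : A →* Kˣ, ∀ a, (ψ a : K) = χ a := by
  obtain ⟨v, hv, hv0⟩ := Submodule.exists_mem_ne_zero_of_ne_bot h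
  have hρv (a : A) : ρ a v = χ a • v :=
    End.mem_eigenspace_iff.mp (Submodule.mem_iInf _ |>.mp hv a)
  have eq_of_smul {μ ν : K} (h : μ • v = ν • v) : μ = ν := smul_left_injective K hv0 h
  let φ : A →* K :=
    { toFun := χ
      map_one' := eq_of_smul (by rw [← hρv, map_one, one_smul]; rfl)
      map_mul' a b := eq_of_smul <| by
        rw [← hρv, map_mul, End.mul_apply, hρv, map_smul, hρv, smul_smul, mul_comm] }
  exact ⟨φ.toHomUnits, fun _ ↦ rfl⟩

theorem exists_finset_card_le_finrank_iInf_ker_eq_bot [IsMulCommutative A] [Finite A]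
    [IsAlgClosed K] [CharZero K] [FiniteDimensional K V] (hρ : Injective ρ) :
    ∃ s : Finset (A →* Kˣ), s.card ≤ finrank K V ∧ ⨅ ψ ∈ s, ψ.ker = ⊥ := by
  classical
  have hcomm (a b : A) : Commute (ρ a) (ρ b) := (show Commute a b from mul_comm' a b).map ρ
  have hss (a : A) : (ρ a).IsSemisimple :=
    End.isSemisimple_of_pow_eq_one (Nat.cast_ne_zero.mpr (orderOf_pos a).ne')
      (by rw [← map_pow, pow_orderOf_eq_one, map_one])
  let E (χ : A → K) : Submodule K V := ⨅ a, (ρ a).eigenspace (χ a)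
  have hspan : ⨆ χ, E χ = ⊤ := End.iSup_iInf_eigenspace_eq_top_of_commute hcomm hss
  have hind : iSupIndep fun ψ : A →* Kˣ ↦ E fun a ↦ ψ a :=
    (End.iSupIndep_iInf_eigenspace_of_commute hcomm).comp
      fun ψ ψ' h ↦ MonoidHom.ext fun a ↦ Units.ext (congrFun h a)
  let := hind.fintypeNeBotOfFiniteDimensional
  refine ⟨Finset.univ.map (Embedding.subtype fun ψ : A →* Kˣ ↦ E (fun a ↦ ψ a) ≠ ⊥), ?_, ?_⟩
  · rw [Finset.card_map, Finset.card_univ]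
    exact hind.subtype_ne_bot_le_finrank
  rw [eq_bot_iff]
  intro a ha
  simp only [Subgroup.mem_iInf, Finset.mem_map, Finset.mem_univ, true_and,
    Embedding.subtype_apply, mem_ker] at ha
  suffices ρ a = 1 from hρ (this.trans (map_one ρ).symm)
  suffices ⊤ ≤ LinearMap.eqLocus (ρ a) 1 from LinearMap.ext fun v ↦ this Submodule.mem_top
  rw [← hspan]
  refine iSup_le fun χ ↦ ?_
  by_cases hχ : E χ = ⊥
  · simp [hχ]
  obtain ⟨ψ, rfl⟩ : ∃ ψ : A →* Kˣ, (fun a ↦ (ψ a : K)) = χ :=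
    (exists_monoidHom_of_iInf_eigenspace_ne_bot ρ hχ).imp fun _ ↦ funext
  intro v hv
  have := End.mem_eigenspace_iff.mp (Submodule.mem_iInf _ |>.mp hv a)
  simpa [ha ψ ⟨⟨ψ, hχ⟩, rfl⟩] using this

theorem exists_finset_card_le_finrank_closure_eq_top [IsMulCommutative A] [Finite A]
    [IsAlgClosed K] [CharZero K] [FiniteDimensional K V] (hρ : Injective ρ) :
    ∃ S : Finset A, S.card ≤ finrank K V ∧ Subgroup.closure (S : Set A) = ⊤ := by
  obtain ⟨s, hs_card, hs_ker⟩ := ρ.exists_finset_card_le_finrank_iInf_ker_eq_bot hρ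
  obtain ⟨S, hS_card, hS⟩ :=
    Subgroup.exists_finset_card_le_closure_eq_of_inf_iInf_ker_eq_bot s ⊤ (by rwa [top_inf_eq])
  exact ⟨S, hS_card.trans hs_card, hS⟩

end MonoidHom

/-- **Theorem.** Every finite abelian subgroup `A` of `GL(n, ℂ)` can be generated by `n`
or fewer elements. -/
theorem stmt_13 (n : ℕ) (A : Subgroup (Matrix.GeneralLinearGroup (Fin n) ℂ))
    (hA : IsMulCommutative A) (hfin : Finite A) :
    ∃ S : Finset (Matrix.GeneralLinearGroup (Fin n) ℂ),
      S.card ≤ n ∧ Subgroup.closure (S : Set (Matrix.GeneralLinearGroup (Fin n) ℂ)) = A := by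
  let ρ : A →* Module.End ℂ (Fin n → ℂ) :=
    (Matrix.toLinAlgEquiv' : Matrix (Fin n) (Fin n) ℂ ≃ₐ[ℂ] _).toMonoidHom.comp
      ((Units.coeHom _).comp A.subtype)
  have hρ : Injective ρ :=
    Matrix.toLinAlgEquiv'.injective.comp (Units.val_injective.comp Subtype.val_injective)
  obtain ⟨S, hS_card, hS⟩ := ρ.exists_finset_card_le_finrank_closure_eq_top hρ
  refine ⟨S.map (Embedding.subtype _), ?_, ?_⟩
  · simpa using hS_card
  · rw [Finset.coe_map, Embedding.coe_subtype, ← A.coe_subtype, ← MonoidHom.map_closure, hS,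
      ← MonoidHom.range_eq_map, Subgroup.range_subtype]
end
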